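/- If H and J are cognate hypergraphs on the same carrier C (i.e., related by the reflexive-symmetric-transitive closure of the enhancement relation), then for every Z ⊆ C, the restriction H_Z is connected if and only if J_Z is connected. -/

import Mathlib

namespace HG

variable {α : Type*} [DecidableEq α]

/-- The carrier of a hypergraph: the union of its members. -/
def carrier (H : Finset (Finset α)) : Finset α := H.sup id

/-- A hypergraph (on its carrier) is a finite family of sets not containing `∅`. -/
def IsHypergraph (H : Finset (Finset α)) : Prop := ∅ ∉ H

/-- The restriction `H_Y = {X ∈ H ∣ X ⊆ Y}`. -/
def restrict (H : Finset (Finset α)) (Y : Finset α) : Finset (Finset α) :=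
  H.filter (· ⊆ Y)

/-- `x` and `y` are joined by a path of `H`: a nonempty sequence of distinct members
of `H`, consecutive members intersecting, the first containing `x`, the last `y`. -/
def Joined (H : Finset (Finset α)) (x y : α) : Prop :=
  ∃ (X : Finset α) (l : List (Finset α)),
    (X :: l).Nodup ∧ (∀ Z ∈ X :: l, Z ∈ H) ∧
    (X :: l).Chain' (fun A B => (A ∩ B).Nonempty) ∧
    x ∈ X ∧ y ∈ (X :: l).getLast (List.cons_ne_nil X l)

/-- Path-connectedness of a hypergraph: any two carrier elements are joined. -/
def Conn (H : Finset (Finset α)) : Prop :=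
  ∀ x ∈ carrier H, ∀ y ∈ carrier H, Joined H x y

/-- `P` is a hypergraph partition of `H`: a partition of `H` whose family of
carriers is a partition of the carrier of `H`. -/
def IsHGPartition (H : Finset (Finset α)) (P : Finset (Finset (Finset α))) : Prop :=
  (∀ Q ∈ P, Q ≠ ∅) ∧
  (∀ Q ∈ P, ∀ Q' ∈ P, Q ≠ Q' → Disjoint Q Q') ∧
  P.sup id = H ∧
  (∀ Q ∈ P, ∀ Q' ∈ P, Q ≠ Q' → Disjoint (carrier Q) (carrier Q'))

/-- A hypergraph is atomic when it contains all singletons of carrier elements. -/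
def Atomic (H : Finset (Finset α)) : Prop := ∀ x ∈ carrier H, {x} ∈ H

/-- A hypergraph is saturated when intersecting members have their union in it. -/
def Saturated (H : Finset (Finset α)) : Prop :=
  ∀ X ∈ H, ∀ Y ∈ H, (X ∩ Y).Nonempty → X ∪ Y ∈ H

/-- `Y` is dispensable in `H` when `(H_Y) \ {Y}` is a connected hypergraph on `Y`. -/
def Dispensable (H : Finset (Finset α)) (Y : Finset α) : Prop :=
  IsHypergraph ((restrict H Y).erase Y) ∧
  carrier ((restrict H Y).erase Y) = Y ∧
  Conn ((restrict H Y).erase Y)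

/-- `J` enhances `H` when `J = H ∪ {Y}` for some `Y ∉ H` dispensable in `H`. -/
def Enhances (J H : Finset (Finset α)) : Prop :=
  ∃ Y, Dispensable H Y ∧ Y ∉ H ∧ J = insert Y H

/-- Cognation: the equivalence closure of the enhancement relation. -/
def Cognate (H J : Finset (Finset α)) : Prop :=
  Relation.EqvGen Enhances H J

/-- The finest hypergraph partition: one all of whose parts are connected. -/
def FinestHGPartition (H : Finset (Finset α)) (P : Finset (Finset (Finset α))) : Prop :=
  IsHGPartition H P ∧ ∀ Q ∈ P, Conn Q

/-- Constructions of a hypergraph, defined recursively. -/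
inductive IsConstruction : Finset (Finset α) → Finset (Finset α) → Prop
  | empty : IsConstruction ∅ ∅
  | conn {H K : Finset (Finset α)} {x : α} :
      (carrier H).Nonempty → Conn H → x ∈ carrier H →
      IsConstruction (restrict H ((carrier H).erase x)) K →
      IsConstruction H (insert (carrier H) K)
  | parts {H : Finset (Finset α)} {P : Finset (Finset (Finset α))}
      {K : Finset (Finset α) → Finset (Finset α)} :
      2 ≤ (carrier H).card → ¬ Conn H → 2 ≤ P.card → FinestHGPartition H P →
      (∀ Q ∈ P, IsConstruction Q (K Q)) →
      IsConstruction H (P.sup K)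

/-- An `M`-antichain: at least two members of `M`, pairwise incomparable. -/
def IsAntichainIn (M S : Finset (Finset α)) : Prop :=
  S ⊆ M ∧ 2 ≤ S.card ∧ ∀ X ∈ S, ∀ Y ∈ S, X ≠ Y → ¬ X ⊆ Y ∧ ¬ Y ⊆ X

/-- `S` misses `H` when the union of `S` is not a member of `H`. -/
def Misses (H S : Finset (Finset α)) : Prop := S.sup id ∉ H

/-- `x` is `X`-superficial relative to `M`. -/
def Superficial (M : Finset (Finset α)) (X : Finset α) (x : α) : Prop :=
  x ∈ X ∧ ∀ Y ∈ M, Y ⊂ X → x ∉ Y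

/-- ASC-hypergraph: atomic, saturated and connected hypergraph. -/
def ASC (H : Finset (Finset α)) : Prop :=
  IsHypergraph H ∧ Atomic H ∧ Saturated H ∧ Conn H

end HG

/-!
Connectivity of a hypergraph only depends on the reflexive-transitive closure of the relation
"`x` and `y` lie in a common member". Adding a dispensable `Y` to `H` does not change that
closure on `H_Z`: if `Y ⊆ Z`, any two points of `Y` are already joined inside `H_Y ⊆ H_Z`, and
otherwise `Y` is not even a member of the restriction.
-/

namespace HG

variable {α : Type*}

def Adj (H : Finset (Finset α)) (x y : α) : Prop := ∃ X ∈ H, x ∈ X ∧ y ∈ X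

lemma adj_mono {H K : Finset (Finset α)} (h : K ⊆ H) : Adj K ≤ Adj H :=
  fun _ _ ⟨X, hX, hx, hy⟩ ↦ ⟨X, h hX, hx, hy⟩

variable [DecidableEq α]

lemma mem_carrier {H : Finset (Finset α)} {x : α} : x ∈ carrier H ↔ ∃ X ∈ H, x ∈ X := by
  simp [carrier, Finset.mem_sup]

lemma carrier_mono {H K : Finset (Finset α)} (h : K ⊆ H) : carrier K ⊆ carrier H :=
  Finset.sup_mono h

section Paths

variable {H : Finset (Finset α)}

lemma joined_of_mem {X : Finset α} (hX : X ∈ H) {x y : α} (hx : x ∈ X) (hy : y ∈ X) :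
    Joined H x y :=
  ⟨X, [], by simp, by simp [hX], List.isChain_singleton _, hx, by simpa⟩

/-- If `X` already occurs on the path from `b`, the path is cut at `X` to keep it duplicate-free. -/
lemma Joined.cons {X : Finset α} (hX : X ∈ H) {x b y : α} (hx : x ∈ X) (hb : b ∈ X)
    (h : Joined H b y) : Joined H x y := by
  obtain ⟨X', l, hnodup, hmem, hchain, hbX', hy⟩ := h
  by_cases hXl : X ∈ X' :: l
  · obtain ⟨s, t, hst⟩ := List.append_of_mem hXl
    have hsuffix : (X :: t) <:+ (X' :: l) := ⟨s, hst.symm⟩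
    refine ⟨X, t, hnodup.sublist hsuffix.sublist, fun Z hZ ↦ hmem Z (hsuffix.sublist.mem hZ),
      hchain.suffix hsuffix, hx, ?_⟩
    have hlast : (X' :: l).getLast (List.cons_ne_nil X' l)
        = (s ++ X :: t).getLast (hst ▸ List.cons_ne_nil X' l) := by
      congr 1
    rwa [hlast, List.getLast_append_of_ne_nil _ (List.cons_ne_nil X t)] at hy
  · refine ⟨X, X' :: l, List.nodup_cons.mpr ⟨hXl, hnodup⟩, ?_,
      List.isChain_cons_cons.mpr ⟨⟨b, Finset.mem_inter.mpr ⟨hb, hbX'⟩⟩, hchain⟩, hx, ?_⟩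
    · intro Z hZ
      rcases List.mem_cons.mp hZ with rfl | hZ
      exacts [hX, hmem Z hZ]
    · rwa [List.getLast_cons (List.cons_ne_nil X' l)]

lemma reflTransGen_adj_of_isChain :
    ∀ (l : List (Finset α)) (X : Finset α) (x y : α), (∀ Z ∈ X :: l, Z ∈ H) →
      (X :: l).IsChain (fun A B ↦ (A ∩ B).Nonempty) → x ∈ X →
      y ∈ (X :: l).getLast (List.cons_ne_nil X l) → Relation.ReflTransGen (Adj H) x y
  | [], X, x, y, hmem, _, hx, hy =>
    .single ⟨X, hmem X (by simp), hx, by simpa using hy⟩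
  | X' :: l, X, x, y, hmem, hchain, hx, hy => by
    obtain ⟨⟨z, hz⟩, hchain'⟩ := List.isChain_cons_cons.mp hchain
    rw [Finset.mem_inter] at hz
    refine .head ⟨X, hmem X (by simp), hx, hz.1⟩ (reflTransGen_adj_of_isChain l X' z y
      (fun Z hZ ↦ hmem Z (List.mem_cons_of_mem _ hZ)) hchain' hz.2 ?_)
    rwa [List.getLast_cons (List.cons_ne_nil X' l)] at hy

lemma joined_iff {x y : α} :
    Joined H x y ↔ Relation.ReflTransGen (Adj H) x y ∧ y ∈ carrier H := by
  constructor
  · rintro ⟨X, l, -, hmem, hchain, hx, hy⟩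
    exact ⟨reflTransGen_adj_of_isChain l X x y hmem hchain hx hy,
      mem_carrier.mpr ⟨_, hmem _ (List.getLast_mem _), hy⟩⟩
  · rintro ⟨hxy, hy⟩
    induction hxy using Relation.ReflTransGen.head_induction_on with
    | refl =>
      obtain ⟨X, hX, hyX⟩ := mem_carrier.mp hy
      exact joined_of_mem hX hyX hyX
    | head hstep _ ih =>
      obtain ⟨X, hX, hx, hb⟩ := hstep
      exact ih.cons hX hx hb

lemma conn_iff_reflTransGen :
    Conn H ↔ ∀ x ∈ carrier H, ∀ y ∈ carrier H, Relation.ReflTransGen (Adj H) x y :=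
  forall₂_congr fun _ _ ↦ forall₂_congr fun _ hy ↦ joined_iff.trans (and_iff_left hy)

end Paths

lemma conn_insert_carrier_iff {H K : Finset (Finset α)} (hKH : K ⊆ H) (hK : Conn K) :
    Conn (insert (carrier K) H) ↔ Conn H := by
  have hcarrier : carrier (insert (carrier K) H) = carrier H := by
    simp only [carrier, Finset.sup_insert, id_eq]
    exact Finset.union_eq_right.mpr (carrier_mono hKH)
  have hclosure : Relation.ReflTransGen (Adj (insert (carrier K) H))
      = Relation.ReflTransGen (Adj H) := by
    refine le_antisymm (Relation.reflTransGen_closed ?_)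
      (Relation.ReflTransGen.mono (adj_mono (Finset.subset_insert _ _)))
    rintro x y ⟨X, hX, hx, hy⟩
    rcases Finset.mem_insert.mp hX with rfl | hX
    · exact Relation.ReflTransGen.mono (adj_mono hKH) x y
        (conn_iff_reflTransGen.mp hK x hx y hy)
    · exact .single ⟨X, hX, hx, hy⟩
  rw [conn_iff_reflTransGen, conn_iff_reflTransGen, hcarrier, hclosure]

lemma restrict_mono {H : Finset (Finset α)} {Y Z : Finset α} (h : Y ⊆ Z) :
    restrict H Y ⊆ restrict H Z :=
  fun X hX ↦ by
    rw [restrict, Finset.mem_filter] at hX ⊢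
    exact ⟨hX.1, hX.2.trans h⟩

lemma restrict_insert {H : Finset (Finset α)} {Y Z : Finset α} :
    restrict (insert Y H) Z = if Y ⊆ Z then insert Y (restrict H Z) else restrict H Z :=
  Finset.filter_insert _ _ _

lemma Enhances.conn_restrict_iff {H J : Finset (Finset α)} (h : Enhances J H) (Z : Finset α) :
    Conn (restrict J Z) ↔ Conn (restrict H Z) := by
  obtain ⟨Y, ⟨-, hcarrier, hconn⟩, hYH, rfl⟩ := h
  have hY : Y ∉ restrict H Y := fun hm ↦ hYH (Finset.mem_filter.mp hm).1
  rw [Finset.erase_eq_of_notMem hY] at hcarrier hconn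
  rw [restrict_insert]
  split_ifs with hYZ
  · rw [← hcarrier]
    exact conn_insert_carrier_iff (restrict_mono hYZ) hconn
  · rfl

lemma Cognate.conn_restrict_iff {H J : Finset (Finset α)} (hc : Cognate H J) (Z : Finset α) :
    Conn (restrict H Z) ↔ Conn (restrict J Z) := by
  induction hc with
  | rel _ _ hab => exact hab.conn_restrict_iff Z
  | refl => exact Iff.rfl
  | symm _ _ _ ih => exact ih.symm
  | trans _ _ _ _ _ ih₁ ih₂ => exact ih₁.trans ih₂

end HG

open HG

theorem cognate_restrict_connected_iff_general
    {α : Type*} [DecidableEq α]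
    (H J : Finset (Finset α))
    (hc : Cognate H J) :
    ∀ Z ⊆ carrier H, (Conn (restrict H Z) ↔ Conn (restrict J Z)) :=
  fun Z _ ↦ hc.conn_restrict_iff Z

theorem cognate_restrict_connected_iff
    {α : Type*} [DecidableEq α]
    (H J : Finset (Finset α)) (hH : IsHypergraph H) (hJ : IsHypergraph J)
    (hc : Cognate H J) :
    ∀ Z ⊆ carrier H, (Conn (restrict H Z) ↔ Conn (restrict J Z)) :=
  cognate_restrict_connected_iff_general H J hc
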